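/- The class of languages accepted by DFAwtls is strictly contained in the class of languages accepted by RDFAwtls: ℒ(DFAwtl) ⊊ ℒ(RDFAwtl). -/

import Mathlib

/-- A nondeterministic finite automaton with translucent letters (NFAwtl). -/
structure NFAwtl (Q α : Type) where
  τ : Q → Set α
  I : Set Q
  F : Set Q
  δ : Q → α → Set Q
  tr : ∀ q a, a ∈ τ q → δ q a = ∅

namespace NFAwtl

variable {Q α : Type}

/-- One computation step of an NFAwtl: delete the leftmost non-translucent letter
and change state (the head returns to the left end). -/
def Step (A : NFAwtl Q α) : Q × List α → Q × List α → Prop := fun c c' =>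
  ∃ u a v, c.2 = u ++ a :: v ∧ (∀ x ∈ u, x ∈ A.τ c.1) ∧ a ∉ A.τ c.1 ∧
    c'.1 ∈ A.δ c.1 a ∧ c'.2 = u ++ v

/-- Acceptance: from some initial state, reach a configuration whose remaining
letters are all translucent for a final state. -/
def Accepts (A : NFAwtl Q α) (w : List α) : Prop :=
  ∃ q₀ ∈ A.I, ∃ q w', Relation.ReflTransGen A.Step (q₀, w) (q, w') ∧
    (∀ x ∈ w', x ∈ A.τ q) ∧ q ∈ A.F

def lang (A : NFAwtl Q α) : Set (List α) := { w | A.Accepts w }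

/-- A DFAwtl: single initial state and at most one transition per state/letter. -/
def Deterministic (A : NFAwtl Q α) : Prop :=
  (∃ q₀, A.I = {q₀}) ∧ ∀ q a, (A.δ q a).Subsingleton

end NFAwtl

/-- A repetitive NFAwtl (RNFAwtl): on the end-of-tape marker it may accept
(states in `Facc`) or change state via `δend` and continue. -/
structure RNFAwtl (Q α : Type) where
  τ : Q → Set α
  I : Set Q
  δ : Q → α → Set Q
  δend : Q → Set Q
  Facc : Set Q
  tr : ∀ q a, a ∈ τ q → δ q a = ∅
  accEnd : ∀ q, q ∈ Facc → δend q = ∅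

namespace RNFAwtl

variable {Q α : Type}

/-- One computation step of an RNFAwtl: either delete the leftmost
non-translucent letter, or, when all remaining letters are translucent,
change state via a `◁`-transition and continue. -/
def Step (A : RNFAwtl Q α) : Q × List α → Q × List α → Prop := fun c c' =>
  (∃ u a v, c.2 = u ++ a :: v ∧ (∀ x ∈ u, x ∈ A.τ c.1) ∧ a ∉ A.τ c.1 ∧
    c'.1 ∈ A.δ c.1 a ∧ c'.2 = u ++ v)
  ∨ ((∀ x ∈ c.2, x ∈ A.τ c.1) ∧ c'.1 ∈ A.δend c.1 ∧ c'.2 = c.2)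

def Accepts (A : RNFAwtl Q α) (w : List α) : Prop :=
  ∃ q₀ ∈ A.I, ∃ q w', Relation.ReflTransGen A.Step (q₀, w) (q, w') ∧
    (∀ x ∈ w', x ∈ A.τ q) ∧ q ∈ A.Facc

def lang (A : RNFAwtl Q α) : Set (List α) := { w | A.Accepts w }

/-- An RDFAwtl: single initial state and deterministic transitions. -/
def Deterministic (A : RNFAwtl Q α) : Prop :=
  (∃ q₀, A.I = {q₀}) ∧ (∀ q a, (A.δ q a).Subsingleton) ∧ ∀ q, (A.δend q).Subsingleton

end RNFAwtl

/-- A non-returning repetitive NFAwtl (nr-NFAwtl): the head continues from the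
position of the last deleted letter; on the end-of-tape marker it may change
state and return the head to the left end. -/
structure NrNFAwtl (Q α : Type) where
  τ : Q → Set α
  I : Set Q
  δ : Q → α → Set Q
  δend : Q → Set Q
  Facc : Set Q
  tr : ∀ q a, a ∈ τ q → δ q a = ∅
  accEnd : ∀ q, q ∈ Facc → δend q = ∅

namespace NrNFAwtl

variable {Q α : Type}

/-- Configurations are `(x, q, w)`: `x` is the already-skipped prefix, the head
is on the first letter of `w`. -/
def Step (A : NrNFAwtl Q α) :
    List α × Q × List α → List α × Q × List α → Prop := fun c c' =>
  (∃ u a v, c.2.2 = u ++ a :: v ∧ (∀ x ∈ u, x ∈ A.τ c.2.1) ∧ a ∉ A.τ c.2.1 ∧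
    c'.2.1 ∈ A.δ c.2.1 a ∧ c'.1 = c.1 ++ u ∧ c'.2.2 = v)
  ∨ ((∀ x ∈ c.2.2, x ∈ A.τ c.2.1) ∧ c'.2.1 ∈ A.δend c.2.1 ∧ c'.1 = [] ∧
    c'.2.2 = c.1 ++ c.2.2)

def Accepts (A : NrNFAwtl Q α) (w : List α) : Prop :=
  ∃ q₀ ∈ A.I, ∃ x q w', Relation.ReflTransGen A.Step ([], q₀, w) (x, q, w') ∧
    (∀ y ∈ w', y ∈ A.τ q) ∧ q ∈ A.Facc

def lang (A : NrNFAwtl Q α) : Set (List α) := { w | A.Accepts w }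

def Deterministic (A : NrNFAwtl Q α) : Prop :=
  (∃ q₀, A.I = {q₀}) ∧ (∀ q a, (A.δ q a).Subsingleton) ∧ ∀ q, (A.δend q).Subsingleton

end NrNFAwtl

/-- A non-repetitive non-returning NFAwtl (nr-nr-NFAwtl): non-returning, and it
must halt as soon as all remaining letters to the right are translucent. -/
structure NrnrNFAwtl (Q α : Type) where
  τ : Q → Set α
  I : Set Q
  F : Set Q
  δ : Q → α → Set Q
  tr : ∀ q a, a ∈ τ q → δ q a = ∅

namespace NrnrNFAwtl

variable {Q α : Type}

def Step (A : NrnrNFAwtl Q α) :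
    List α × Q × List α → List α × Q × List α → Prop := fun c c' =>
  ∃ u a v, c.2.2 = u ++ a :: v ∧ (∀ x ∈ u, x ∈ A.τ c.2.1) ∧ a ∉ A.τ c.2.1 ∧
    c'.2.1 ∈ A.δ c.2.1 a ∧ c'.1 = c.1 ++ u ∧ c'.2.2 = v

def Accepts (A : NrnrNFAwtl Q α) (w : List α) : Prop :=
  ∃ q₀ ∈ A.I, ∃ x q w', Relation.ReflTransGen A.Step ([], q₀, w) (x, q, w') ∧
    (∀ y ∈ w', y ∈ A.τ q) ∧ q ∈ A.F

def lang (A : NrnrNFAwtl Q α) : Set (List α) := { w | A.Accepts w }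

def Deterministic (A : NrnrNFAwtl Q α) : Prop :=
  (∃ q₀, A.I = {q₀}) ∧ ∀ q a, (A.δ q a).Subsingleton

end NrnrNFAwtl

/-- Language classes. -/
def NFAwtlLangs (α : Type) [Fintype α] : Set (Set (List α)) :=
  { L | ∃ (Q : Type) (_ : Fintype Q) (A : NFAwtl Q α), A.lang = L }

def DFAwtlLangs (α : Type) [Fintype α] : Set (Set (List α)) :=
  { L | ∃ (Q : Type) (_ : Fintype Q) (A : NFAwtl Q α), A.Deterministic ∧ A.lang = L }

def RNFAwtlLangs (α : Type) [Fintype α] : Set (Set (List α)) :=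
  { L | ∃ (Q : Type) (_ : Fintype Q) (A : RNFAwtl Q α), A.lang = L }

def RDFAwtlLangs (α : Type) [Fintype α] : Set (Set (List α)) :=
  { L | ∃ (Q : Type) (_ : Fintype Q) (A : RNFAwtl Q α), A.Deterministic ∧ A.lang = L }

def NrNFAwtlLangs (α : Type) [Fintype α] : Set (Set (List α)) :=
  { L | ∃ (Q : Type) (_ : Fintype Q) (A : NrNFAwtl Q α), A.lang = L }

def NrDFAwtlLangs (α : Type) [Fintype α] : Set (Set (List α)) :=
  { L | ∃ (Q : Type) (_ : Fintype Q) (A : NrNFAwtl Q α), A.Deterministic ∧ A.lang = L }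

def NrnrNFAwtlLangs (α : Type) [Fintype α] : Set (Set (List α)) :=
  { L | ∃ (Q : Type) (_ : Fintype Q) (A : NrnrNFAwtl Q α), A.lang = L }

def NrnrDFAwtlLangs (α : Type) [Fintype α] : Set (Set (List α)) :=
  { L | ∃ (Q : Type) (_ : Fintype Q) (A : NrnrNFAwtl Q α), A.Deterministic ∧ A.lang = L }

/-- The three-letter alphabet {a, b, c}. -/
inductive Al : Type
  | a | b | c
deriving DecidableEq

instance : Fintype Al :=
  ⟨{Al.a, Al.b, Al.c}, fun x => by cases x <;> simp⟩

/-- The language L_{∨,c} = { w ∈ {a,b,c}* : |w|_c = 1, |w|_a = |w|_b }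
    ∪ { w ∈ {a,b}* : 2·|w|_a = |w|_b }. -/
def Lvc : Set (List Al) :=
  { w | w.count Al.c = 1 ∧ w.count Al.a = w.count Al.b } ∪
  { w | Al.c ∉ w ∧ 2 * w.count Al.a = w.count Al.b }

/-! An RDFAwtl accepts `Lvc`: it deletes the `c`, if there is one, and then checks
`|w|_a = |w|_b` by deleting an `a` and a `b` in turn; if there is no `c`, its end-of-tape
transition moves it to a loop deleting `a`, `b`, `b` in turn.

No DFAwtl `A` accepts `Lvc`. On `a^i b^j t` with `i, j > 0`, in state `q` the machine deletes an
`a` if `a` is not translucent for `q`, and otherwise a `b` if `b` is not; so the states it runs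
through do not depend on `i, j` as long as these stay positive. As there are finitely many states,
this sequence either reaches a state `q` with no such move, or it returns to a state after deleting
`k` letters `a` and `l` letters `b`, `k + l > 0`. Acceptance is invariant along a run of a
deterministic machine. In the first case `A` is stuck in `q` on `a^n b^(2n)` and on
`a^n b^(2n+1)`, so it accepts both or neither. In the second case `a^i b^j t` is accepted iff
`a^(i+k) b^(j+l) t` is; with `t = []` this forces `l = 2k`, with `t = [c]` it forces `k = l`,
contradicting `k + l > 0`. -/

theorem List.eq_of_append_cons_eq_of_not_mem {α : Type*} {S : Set α} :
    ∀ {u u' v v' : List α} {x x' : α}, u ++ x :: v = u' ++ x' :: v' →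
      (∀ y ∈ u, y ∈ S) → x ∉ S → (∀ y ∈ u', y ∈ S) → x' ∉ S → u = u' ∧ x = x' ∧ v = v'
  | [], [], _, _, _, _, h, _, _, _, _ => by simp_all
  | [], y :: _, _, _, _, _, h, _, hx, hu', _ => by
    obtain ⟨rfl, -⟩ := List.cons.inj h
    exact absurd (hu' _ List.mem_cons_self) hx
  | y :: _, [], _, _, _, _, h, hu, _, _, hx' => by
    obtain ⟨rfl, -⟩ := List.cons.inj h
    exact absurd (hu _ List.mem_cons_self) hx'
  | y :: u, y' :: u', _, _, _, _, h, hu, hx, hu', hx' => by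
    obtain ⟨rfl, htail⟩ := List.cons.inj h
    obtain ⟨rfl, rfl, rfl⟩ := List.eq_of_append_cons_eq_of_not_mem htail
      (fun z hz => hu z (.tail _ hz)) hx (fun z hz => hu' z (.tail _ hz)) hx'
    exact ⟨rfl, rfl, rfl⟩

theorem Relation.exists_dead_end_or_cycle {Q : Type*} [Finite Q] (r : Q → Q → Prop) (q₀ : Q) :
    (∃ q, ReflTransGen r q₀ q ∧ ∀ q', ¬ r q q') ∨ ∃ q, ReflTransGen r q₀ q ∧ TransGen r q q := by
  by_contra! h
  obtain ⟨hdead, hacyclic⟩ := h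
  let s : Q → Q → Prop := fun x y => ReflTransGen r q₀ y ∧ TransGen r y x
  have : IsTrans Q s := ⟨fun _ _ _ hxy hyz => ⟨hyz.1, hyz.2.trans hxy.2⟩⟩
  have : Std.Irrefl s := ⟨fun x hx => hacyclic x hx.1 hx.2⟩
  obtain ⟨m, hm, hmin⟩ := (Finite.wellFounded_of_trans_of_irrefl s).has_min
    {q | ReflTransGen r q₀ q} ⟨q₀, .refl⟩
  obtain ⟨q', hq'⟩ := hdead m hm
  exact hmin q' (hm.tail hq') ⟨hm, .single hq'⟩

namespace NFAwtl

variable {Q α : Type} (A : NFAwtl Q α)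

def AcceptsFrom (c : Q × List α) : Prop :=
  ∃ q w', Relation.ReflTransGen A.Step c (q, w') ∧ (∀ x ∈ w', x ∈ A.τ q) ∧ q ∈ A.F

theorem accepts_iff_acceptsFrom {q₀ : Q} (hI : A.I = {q₀}) (w : List α) :
    A.Accepts w ↔ A.AcceptsFrom (q₀, w) := by
  simp [Accepts, AcceptsFrom, hI]

variable {A}

theorem not_step_of_forall_mem_τ {c d : Q × List α} (h : ∀ x ∈ c.2, x ∈ A.τ c.1) :
    ¬ A.Step c d := by
  rintro ⟨u, x, v, hc, -, hx, -⟩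
  exact hx (h x (by simp [hc]))

theorem step_functional (hδ : ∀ q x, (A.δ q x).Subsingleton) {c d e : Q × List α}
    (hd : A.Step c d) (he : A.Step c e) : d = e := by
  obtain ⟨u, x, v, hc, hu, hx, hdq, hdw⟩ := hd
  obtain ⟨u', x', v', hc', hu', hx', heq, hew⟩ := he
  obtain ⟨rfl, rfl, rfl⟩ := List.eq_of_append_cons_eq_of_not_mem (hc.symm.trans hc') hu hx hu' hx'
  exact Prod.ext (hδ _ _ hdq heq) (hdw.trans hew.symm)

theorem acceptsFrom_iff_of_step (hδ : ∀ q x, (A.δ q x).Subsingleton) {c d : Q × List α}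
    (h : A.Step c d) : A.AcceptsFrom c ↔ A.AcceptsFrom d := by
  refine ⟨fun ⟨q, w', hc, hτ, hF⟩ => ?_, fun ⟨q, w', hd, hτ, hF⟩ => ⟨q, w', .head h hd, hτ, hF⟩⟩
  rcases hc.cases_head with rfl | ⟨d', hd', hrest⟩
  · exact absurd h (not_step_of_forall_mem_τ hτ)
  · exact ⟨q, w', step_functional hδ h hd' ▸ hrest, hτ, hF⟩

theorem acceptsFrom_iff_of_reflTransGen (hδ : ∀ q x, (A.δ q x).Subsingleton)
    {c d : Q × List α} (h : Relation.ReflTransGen A.Step c d) :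
    A.AcceptsFrom c ↔ A.AcceptsFrom d := by
  induction h with
  | refl => rfl
  | tail _ hstep ih => exact ih.trans (acceptsFrom_iff_of_step hδ hstep)

theorem acceptsFrom_iff_of_forall_not_step {c : Q × List α} (h : ∀ d, ¬ A.Step c d) :
    A.AcceptsFrom c ↔ (∀ x ∈ c.2, x ∈ A.τ c.1) ∧ c.1 ∈ A.F := by
  refine ⟨fun ⟨q, w', hc, hτ, hF⟩ => ?_, fun ⟨hτ, hF⟩ => ⟨c.1, c.2, .refl, hτ, hF⟩⟩
  rcases hc.cases_head with rfl | ⟨d, hd, -⟩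
  · exact ⟨hτ, hF⟩
  · exact absurd hd (h d)

end NFAwtl

def NFAwtl.toRNFAwtl {Q α : Type} (A : NFAwtl Q α) : RNFAwtl Q α where
  τ := A.τ
  I := A.I
  δ := A.δ
  δend _ := ∅
  Facc := A.F
  tr := A.tr
  accEnd _ _ := rfl

theorem NFAwtl.toRNFAwtl_step {Q α : Type} (A : NFAwtl Q α) : A.toRNFAwtl.Step = A.Step := by
  funext c c'
  exact propext ⟨fun h => h.resolve_right fun ⟨_, hend, _⟩ => hend, .inl⟩

theorem NFAwtl.toRNFAwtl_lang {Q α : Type} (A : NFAwtl Q α) : A.toRNFAwtl.lang = A.lang := by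
  ext w
  simp only [RNFAwtl.lang, RNFAwtl.Accepts, toRNFAwtl_step]
  rfl

theorem DFAwtlLangs_subset_RDFAwtlLangs (α : Type) [Fintype α] :
    DFAwtlLangs α ⊆ RDFAwtlLangs α := by
  rintro L ⟨Q, hQ, A, ⟨hI, hδ⟩, rfl⟩
  exact ⟨Q, hQ, A.toRNFAwtl, ⟨hI, hδ, fun _ => Set.subsingleton_empty⟩, A.toRNFAwtl_lang⟩

def abBlock (i j : ℕ) : List Al := List.replicate i Al.a ++ List.replicate j Al.b

theorem abBlock_succ_left (i j : ℕ) : abBlock (i + 1) j = Al.a :: abBlock i j := by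
  simp [abBlock, List.replicate_succ]

theorem abBlock_succ_right (i j : ℕ) :
    abBlock i (j + 1) = List.replicate i Al.a ++ Al.b :: List.replicate j Al.b := by
  simp [abBlock, List.replicate_succ]

theorem mem_abBlock {x : Al} {i j : ℕ} (h : x ∈ abBlock i j) : x = Al.a ∨ x = Al.b := by
  simp only [abBlock, List.mem_append, List.mem_replicate] at h
  tauto

theorem abBlock_mem_Lvc_iff (i j : ℕ) : abBlock i j ∈ Lvc ↔ 2 * i = j := by
  simp [Lvc, abBlock, List.count_replicate]

theorem abBlock_append_c_mem_Lvc_iff (i j : ℕ) : abBlock i j ++ [Al.c] ∈ Lvc ↔ i = j := by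
  simp [Lvc, abBlock, List.count_replicate]

namespace NFAwtl

variable {Q : Type} {A : NFAwtl Q Al}

variable (A) in
def BlockStep (q q' : Q) : Prop :=
  (Al.a ∉ A.τ q ∧ q' ∈ A.δ q Al.a) ∨ (Al.a ∈ A.τ q ∧ Al.b ∉ A.τ q ∧ q' ∈ A.δ q Al.b)

variable (A) in
def BlockReaches (q q' : Q) (da db : ℕ) : Prop :=
  ∀ i j t, Relation.ReflTransGen A.Step (q, abBlock (i + da) (j + db) ++ t) (q', abBlock i j ++ t)

theorem BlockReaches.refl (q : Q) : A.BlockReaches q q 0 0 :=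
  fun _ _ _ => .refl

theorem BlockReaches.trans {q q' q'' : Q} {da db da' db' : ℕ} (h : A.BlockReaches q q' da db)
    (h' : A.BlockReaches q' q'' da' db') : A.BlockReaches q q'' (da + da') (db + db') := by
  intro i j t
  have hfirst := h (i + da') (j + db') t
  rw [add_assoc, add_assoc, add_comm da', add_comm db'] at hfirst
  exact hfirst.trans (h' i j t)

theorem BlockStep.blockReaches {q q' : Q} (h : A.BlockStep q q') :
    ∃ da db, da + db = 1 ∧ A.BlockReaches q q' da db := by
  rcases h with ⟨ha, hq'⟩ | ⟨ha, hb, hq'⟩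
  · refine ⟨1, 0, rfl, fun i j t => .single ⟨[], Al.a, abBlock i j ++ t, ?_, by simp, ha, hq', rfl⟩⟩
    simp [abBlock_succ_left]
  · refine ⟨0, 1, rfl, fun i j t => .single
      ⟨List.replicate i Al.a, Al.b, List.replicate j Al.b ++ t, ?_, ?_, hb, hq', ?_⟩⟩
    · simp [abBlock_succ_right]
    · intro y hy
      rwa [List.eq_of_mem_replicate hy]
    · simp [abBlock]

theorem blockReaches_of_reflTransGen {q q' : Q} (h : Relation.ReflTransGen A.BlockStep q q') :
    ∃ da db, A.BlockReaches q q' da db := by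
  induction h with
  | refl => exact ⟨0, 0, .refl _⟩
  | tail _ hstep ih =>
    obtain ⟨da, db, hreach⟩ := ih
    obtain ⟨da', db', -, hstep⟩ := hstep.blockReaches
    exact ⟨_, _, hreach.trans hstep⟩

theorem blockReaches_of_transGen {q q' : Q} (h : Relation.TransGen A.BlockStep q q') :
    ∃ da db, 0 < da + db ∧ A.BlockReaches q q' da db := by
  obtain ⟨q'', hfirst, hrest⟩ := Relation.TransGen.head'_iff.mp h
  obtain ⟨da, db, hone, hreach⟩ := hfirst.blockReaches
  obtain ⟨da', db', hreach'⟩ := blockReaches_of_reflTransGen hrest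
  exact ⟨_, _, by omega, hreach.trans hreach'⟩

theorem not_step_abBlock_of_forall_not_blockStep {q : Q} (hq : ∀ q', ¬ A.BlockStep q q')
    (i j : ℕ) (d : Q × List Al) : ¬ A.Step (q, abBlock (i + 1) j) d := by
  rintro ⟨u, x, v, hw, hu, hx, hd, -⟩
  dsimp only at hw hu hx
  by_cases ha : Al.a ∈ A.τ q
  · have hxb : x = Al.b := by
      have hxw : x ∈ abBlock (i + 1) j := by simp [hw]
      rcases mem_abBlock hxw with rfl | rfl
      · exact absurd ha hx
      · rfl
    subst hxb
    exact hq d.1 (.inr ⟨ha, hx, hd⟩)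
  · have hxa : x = Al.a := by
      rw [abBlock_succ_left] at hw
      cases u with
      | nil => exact (List.cons.inj hw).1.symm
      | cons y u => exact absurd ((List.cons.inj hw).1 ▸ hu y List.mem_cons_self) ha
    subst hxa
    exact hq d.1 (.inl ⟨hx, hd⟩)

variable (hδ : ∀ q x, (A.δ q x).Subsingleton)
include hδ

theorem acceptsFrom_abBlock_of_dead_end {q₀ q : Q} {da db : ℕ} (hreach : A.BlockReaches q₀ q da db)
    (hq : ∀ q', ¬ A.BlockStep q q') (i j : ℕ) :
    A.AcceptsFrom (q₀, abBlock (i + 1 + da) (j + 1 + db)) ↔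
      Al.a ∈ A.τ q ∧ Al.b ∈ A.τ q ∧ q ∈ A.F := by
  have hrun := hreach (i + 1) (j + 1) []
  simp only [List.append_nil] at hrun
  rw [acceptsFrom_iff_of_reflTransGen hδ hrun,
    acceptsFrom_iff_of_forall_not_step (not_step_abBlock_of_forall_not_blockStep hq i (j + 1))]
  simp [abBlock, and_assoc]

theorem acceptsFrom_abBlock_pump {q₀ q : Q} {da db da' db' : ℕ}
    (hreach : A.BlockReaches q₀ q da db) (hcycle : A.BlockReaches q q da' db') (i j : ℕ)
    (t : List Al) :
    A.AcceptsFrom (q₀, abBlock (i + da) (j + db) ++ t) ↔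
      A.AcceptsFrom (q₀, abBlock (i + da' + da) (j + db' + db) ++ t) := by
  rw [acceptsFrom_iff_of_reflTransGen hδ (hreach i j t),
    acceptsFrom_iff_of_reflTransGen hδ ((hreach (i + da') (j + db') t).trans (hcycle i j t))]

end NFAwtl

theorem Lvc_not_mem_DFAwtlLangs : Lvc ∉ DFAwtlLangs Al := by
  rintro ⟨Q, _, A, ⟨⟨q₀, hI⟩, hδ⟩, hL⟩
  have hacc (w : List Al) : A.AcceptsFrom (q₀, w) ↔ w ∈ Lvc := by
    rw [← A.accepts_iff_acceptsFrom hI, ← hL]; rfl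
  rcases Relation.exists_dead_end_or_cycle A.BlockStep q₀ with
    ⟨q, hrun, hdead⟩ | ⟨q, hrun, hcycle⟩
  · obtain ⟨da, db, hreach⟩ := NFAwtl.blockReaches_of_reflTransGen hrun
    have hdoubled := NFAwtl.acceptsFrom_abBlock_of_dead_end hδ hreach hdead db (db + 1 + 2 * da)
    have hshifted := NFAwtl.acceptsFrom_abBlock_of_dead_end hδ hreach hdead db (db + 2 + 2 * da)
    rw [hacc, abBlock_mem_Lvc_iff] at hdoubled hshifted
    have := hshifted.mpr (hdoubled.mp (by ring))
    omega
  · obtain ⟨da, db, hreach⟩ := NFAwtl.blockReaches_of_reflTransGen hrun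
    obtain ⟨da', db', hpos, hcycle⟩ := NFAwtl.blockReaches_of_transGen hcycle
    have hdoubled := NFAwtl.acceptsFrom_abBlock_pump hδ hreach hcycle db (2 * da + db) []
    have hbalanced := NFAwtl.acceptsFrom_abBlock_pump hδ hreach hcycle db da [Al.c]
    simp only [List.append_nil, hacc, abBlock_mem_Lvc_iff, abBlock_append_c_mem_Lvc_iff]
      at hdoubled hbalanced
    have h₁ := hdoubled.mp (by ring)
    have h₂ := hbalanced.mp (by ring)
    omega

namespace RNFAwtl

variable {Q α : Type} [DecidableEq α] {A : RNFAwtl Q α}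

theorem step_erase {q q' : Q} {x : α} {w : List α} (hx : x ∈ w) (hxτ : x ∉ A.τ q)
    (hw : ∀ y ∈ w, y ≠ x → y ∈ A.τ q) (hq' : q' ∈ A.δ q x) : A.Step (q, w) (q', w.erase x) := by
  obtain ⟨l₁, l₂, hx₁, rfl, he⟩ := List.exists_erase_eq hx
  exact .inl ⟨l₁, x, l₂, rfl, fun y hy => hw y (by simp [hy]) (ne_of_mem_of_not_mem hy hx₁),
    hxτ, hq', he⟩

theorem Step.erase_or_end {q q' : Q} {w w' : List α} (h : A.Step (q, w) (q', w')) :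
    (∃ x ∈ w, x ∉ A.τ q ∧ q' ∈ A.δ q x ∧ w' = w.erase x) ∨
      ((∀ x ∈ w, x ∈ A.τ q) ∧ q' ∈ A.δend q ∧ w' = w) := by
  rcases h with ⟨u, x, v, hc, hu, hx, hq', hc'⟩ | hend
  · dsimp only at hc hu hx hq' hc'
    refine .inl ⟨x, by simp [hc], hx, hq', ?_⟩
    rw [hc, hc', List.erase_append_right _ (fun hxu => hx (hu x hxu)), List.erase_cons_head]
  · exact .inr hend

end RNFAwtl

inductive LvcState : Type
  | start | e0 | e1 | d0 | d1 | d2 | accept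
deriving DecidableEq

instance : Fintype LvcState :=
  ⟨{.start, .e0, .e1, .d0, .d1, .d2, .accept}, fun q => by cases q <;> simp⟩

open LvcState

def lvcRDFA : RNFAwtl LvcState Al where
  τ
    | start => {Al.a, Al.b}
    | e0 | d0 => {Al.b}
    | e1 | d1 | d2 => {Al.a}
    | accept => ∅
  I := {start}
  δ
    | start, Al.c => {e0}
    | e0, Al.a => {e1}
    | e1, Al.b => {e0}
    | d0, Al.a => {d1}
    | d1, Al.b => {d2}
    | d2, Al.b => {d0}
    | _, _ => ∅
  δend
    | start => {d0}
    | e0 | d0 => {accept}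
    | _ => ∅
  Facc := {accept}
  tr q x h := by cases q <;> cases x <;> simp_all
  accEnd q h := by cases q <;> simp_all

theorem lvcRDFA_deterministic : lvcRDFA.Deterministic :=
  ⟨⟨start, rfl⟩, fun q x => by cases q <;> cases x <;> simp [lvcRDFA],
    fun q => by cases q <;> simp [lvcRDFA]⟩

def LvcState.residual : LvcState → List Al → Prop
  | start, w => w ∈ Lvc
  | e0, w => w.count Al.c = 0 ∧ w.count Al.a = w.count Al.b
  | e1, w => w.count Al.c = 0 ∧ w.count Al.a + 1 = w.count Al.b
  | d0, w => w.count Al.c = 0 ∧ 2 * w.count Al.a = w.count Al.b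
  | d1, w => w.count Al.c = 0 ∧ 2 * w.count Al.a + 2 = w.count Al.b
  | d2, w => w.count Al.c = 0 ∧ 2 * w.count Al.a + 1 = w.count Al.b
  | accept, w => w = []

namespace LvcState

theorem residual_of_step {c c' : LvcState × List Al} (h : lvcRDFA.Step c c')
    (h' : c'.1.residual c'.2) : c.1.residual c.2 := by
  obtain ⟨q, w⟩ := c
  obtain ⟨q', w'⟩ := c'
  rcases h.erase_or_end with ⟨x, hx, -, hq', rfl⟩ | ⟨hτ, hq', rfl⟩
  · have := List.count_pos_iff.mpr hx
    cases q <;> cases x <;> simp [lvcRDFA] at hq' <;> subst hq' <;>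
      simp [residual, Lvc] at h' ⊢ <;> omega
  · cases q <;> simp [lvcRDFA] at hq' hτ <;> subst hq' <;>
      simp_all [residual, Lvc, List.count_eq_zero]

theorem residual_of_reflTransGen {c c' : LvcState × List Al}
    (h : Relation.ReflTransGen lvcRDFA.Step c c') (h' : c'.1.residual c'.2) : c.1.residual c.2 := by
  induction h using Relation.ReflTransGen.head_induction_on with
  | refl => exact h'
  | head hstep _ ih => exact residual_of_step hstep ih

end LvcState

theorem Al.eq_nil_of_count_eq_zero {w : List Al} (ha : w.count Al.a = 0)
    (hb : w.count Al.b = 0) (hc : w.count Al.c = 0) : w = [] := by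
  refine List.eq_nil_iff_forall_not_mem.mpr fun x hx => ?_
  cases x <;> simp_all [List.count_eq_zero]

theorem lvcRDFA_step_erase {q q' : LvcState} {x : Al} {w : List Al}
    (hτ : ∀ y, y ∈ lvcRDFA.τ q ↔ y ≠ x ∧ y ≠ Al.c) (hq' : q' ∈ lvcRDFA.δ q x)
    (hc : w.count Al.c = 0) (hx : 0 < w.count x) : lvcRDFA.Step (q, w) (q', w.erase x) :=
  RNFAwtl.step_erase (List.count_pos_iff.mp hx) (by simp [hτ])
    (fun y hy hne => (hτ y).mpr ⟨hne, ne_of_mem_of_not_mem hy (List.count_eq_zero.mp hc)⟩) hq'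

theorem e0_reaches_accept {w : List Al} (hw : e0.residual w) :
    Relation.ReflTransGen lvcRDFA.Step (e0, w) (accept, []) := by
  induction hn : w.count Al.a generalizing w with
  | zero =>
    obtain rfl := Al.eq_nil_of_count_eq_zero hn (by rw [← hw.2, hn]) hw.1
    exact .single (.inr ⟨by simp, by simp [lvcRDFA], rfl⟩)
  | succ n ih =>
    obtain ⟨hc, hab⟩ := hw
    have hstep_a : lvcRDFA.Step (e0, w) (e1, w.erase Al.a) :=
      lvcRDFA_step_erase (fun y => by cases y <;> simp [lvcRDFA]) (by simp [lvcRDFA]) hc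
        (by omega)
    have hstep_b : lvcRDFA.Step (e1, w.erase Al.a) (e0, (w.erase Al.a).erase Al.b) :=
      lvcRDFA_step_erase (fun y => by cases y <;> simp [lvcRDFA]) (by simp [lvcRDFA])
        (by simp [hc]) (by rw [List.count_erase_of_ne (by decide)]; omega)
    exact .head hstep_a (.head hstep_b (ih ⟨by simp [hc], by simp; omega⟩ (by simp; omega)))

theorem d0_reaches_accept {w : List Al} (hw : d0.residual w) :
    Relation.ReflTransGen lvcRDFA.Step (d0, w) (accept, []) := by
  induction hn : w.count Al.a generalizing w with
  | zero =>
    obtain rfl := Al.eq_nil_of_count_eq_zero hn (by rw [← hw.2, hn]) hw.1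
    exact .single (.inr ⟨by simp, by simp [lvcRDFA], rfl⟩)
  | succ n ih =>
    obtain ⟨hc, hab⟩ := hw
    have hstep_a : lvcRDFA.Step (d0, w) (d1, w.erase Al.a) :=
      lvcRDFA_step_erase (fun y => by cases y <;> simp [lvcRDFA]) (by simp [lvcRDFA]) hc
        (by omega)
    have hstep_b : lvcRDFA.Step (d1, w.erase Al.a) (d2, (w.erase Al.a).erase Al.b) :=
      lvcRDFA_step_erase (fun y => by cases y <;> simp [lvcRDFA]) (by simp [lvcRDFA])
        (by simp [hc]) (by rw [List.count_erase_of_ne (by decide)]; omega)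
    have hstep_b' : lvcRDFA.Step (d2, (w.erase Al.a).erase Al.b)
        (d0, ((w.erase Al.a).erase Al.b).erase Al.b) :=
      lvcRDFA_step_erase (fun y => by cases y <;> simp [lvcRDFA]) (by simp [lvcRDFA])
        (by simp [hc]) (by simp; omega)
    exact .head hstep_a (.head hstep_b (.head hstep_b'
      (ih ⟨by simp [hc], by simp; omega⟩ (by simp; omega))))

theorem lvcRDFA_lang : lvcRDFA.lang = Lvc := by
  ext w
  constructor
  · rintro ⟨q₀, hq₀, q, w', hrun, hτ, hF⟩
    obtain rfl : q₀ = start := hq₀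
    obtain rfl : q = accept := hF
    obtain rfl : w' = [] := List.eq_nil_iff_forall_not_mem.mpr fun x hx => by
      simpa [lvcRDFA] using hτ x hx
    exact LvcState.residual_of_reflTransGen hrun rfl
  · intro hw
    refine ⟨start, rfl, accept, [], ?_, by simp, rfl⟩
    rcases hw with ⟨hc, hab⟩ | ⟨hc, hab⟩
    · have hstep : lvcRDFA.Step (start, w) (e0, w.erase Al.c) :=
        RNFAwtl.step_erase (List.count_pos_iff.mp (by omega)) (by simp [lvcRDFA])
          (fun y _ hy => by cases y <;> simp_all [lvcRDFA]) (by simp [lvcRDFA])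
      exact .head hstep (e0_reaches_accept ⟨by simp [hc], by simpa⟩)
    · have hstep : lvcRDFA.Step (start, w) (d0, w) := .inr ⟨fun x hx => ?_, by simp [lvcRDFA], rfl⟩
      · exact .head hstep (d0_reaches_accept ⟨List.count_eq_zero.mpr hc, hab⟩)
      · cases x <;> simp_all [lvcRDFA]

theorem Lvc_mem_RDFAwtlLangs : Lvc ∈ RDFAwtlLangs Al :=
  ⟨LvcState, inferInstance, lvcRDFA, lvcRDFA_deterministic, lvcRDFA_lang⟩

/-- ℒ(DFAwtl) ⊊ ℒ(RDFAwtl); the witness is L_{∨,c}, which is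
accepted by an RDFAwtl but by no DFAwtl. -/
theorem DFAwtl_ssubset_RDFAwtl :
    (∀ (α : Type) [Fintype α], DFAwtlLangs α ⊆ RDFAwtlLangs α) ∧
    DFAwtlLangs Al ⊂ RDFAwtlLangs Al ∧
    Lvc ∈ RDFAwtlLangs Al ∧ Lvc ∉ DFAwtlLangs Al :=
  ⟨DFAwtlLangs_subset_RDFAwtlLangs,
    Set.ssubset_iff_subset_ne.mpr ⟨DFAwtlLangs_subset_RDFAwtlLangs Al,
      fun h => Lvc_not_mem_DFAwtlLangs (h ▸ Lvc_mem_RDFAwtlLangs)⟩,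
    Lvc_mem_RDFAwtlLangs, Lvc_not_mem_DFAwtlLangs⟩
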